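/- arXiv:1201.0930 — 2 statements merged into one kernel-verified Lean document; each statement's English description precedes it below -/
import Mathlib

section
/- Let v₁ = (a₁,a₂), v₂ = (b₁,b₂) ∈ ℤ² be two vertices of a 2-dimensional reflexive polytope ∇^φ that are the lattice neighbors of a vertex v_z of ∇^φ along the two edges through v_z, and suppose v_z = v₁ + v₂. Then a₁b₂ - a₂b₁ = ±1. -/
open Set

noncomputable section

def dot2 (x y : ℝ × ℝ) : ℝ := x.1 * y.1 + x.2 * y.2

def isLattice2 (x : ℝ × ℝ) : Prop := ∃ a b : ℤ, x = ((a : ℝ), (b : ℝ))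

def dual2 (P : Set (ℝ × ℝ)) : Set (ℝ × ℝ) := {v | ∀ m ∈ P, dot2 m v ≥ -1}

/-!
Since `v_z = v₁ + v₂` lies on both edge lines, `⟨v₂, m₁⟩ = ⟨v_z, m₁⟩ - ⟨v₁, m₁⟩ = 0` and likewise
`⟨v₁, m₂⟩ = 0`. So the integer matrix with rows `v₁, v₂` times the one with columns `m₁, m₂` is `-1`,
and the two integer determinants multiply to `1`.
-/

theorem det_mul_det_eq_pairing {R : Type*} [CommRing R] (a₁ a₂ b₁ b₂ p₁ p₂ q₁ q₂ : R) :
    (a₁ * b₂ - a₂ * b₁) * (p₁ * q₂ - p₂ * q₁) =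
      (a₁ * p₁ + a₂ * p₂) * (b₁ * q₁ + b₂ * q₂) - (a₁ * q₁ + a₂ * q₂) * (b₁ * p₁ + b₂ * p₂) := by
  ring

theorem det_eq_one_or_neg_one_of_pairing_eq_neg_one {a₁ a₂ b₁ b₂ p₁ p₂ q₁ q₂ : ℤ}
    (hap : a₁ * p₁ + a₂ * p₂ = -1) (hbq : b₁ * q₁ + b₂ * q₂ = -1)
    (haq : a₁ * q₁ + a₂ * q₂ = 0) (hbp : b₁ * p₁ + b₂ * p₂ = 0) :
    a₁ * b₂ - a₂ * b₁ = 1 ∨ a₁ * b₂ - a₂ * b₁ = -1 := by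
  refine Int.eq_one_or_neg_one_of_mul_eq_one (v := p₁ * q₂ - p₂ * q₁) ?_
  rw [det_mul_det_eq_pairing, hap, hbq, haq, hbp]
  norm_num

theorem stmt4_general (a₁ a₂ b₁ b₂ z₁ z₂ : ℤ)
    (m₁ m₂ : ℤ × ℤ)
    (he1z : dot2 ((z₁ : ℝ), (z₂ : ℝ)) ((m₁.1 : ℝ), (m₁.2 : ℝ)) = -1)
    (he11 : dot2 ((a₁ : ℝ), (a₂ : ℝ)) ((m₁.1 : ℝ), (m₁.2 : ℝ)) = -1)
    (he2z : dot2 ((z₁ : ℝ), (z₂ : ℝ)) ((m₂.1 : ℝ), (m₂.2 : ℝ)) = -1)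
    (he22 : dot2 ((b₁ : ℝ), (b₂ : ℝ)) ((m₂.1 : ℝ), (m₂.2 : ℝ)) = -1)
    (hsum : z₁ = a₁ + b₁ ∧ z₂ = a₂ + b₂) :
    a₁ * b₂ - a₂ * b₁ = 1 ∨ a₁ * b₂ - a₂ * b₁ = -1 := by
  obtain ⟨rfl, rfl⟩ := hsum
  simp only [dot2] at he1z he11 he2z he22
  have h1z : (a₁ + b₁) * m₁.1 + (a₂ + b₂) * m₁.2 = -1 := by exact_mod_cast he1z
  have h11 : a₁ * m₁.1 + a₂ * m₁.2 = -1 := by exact_mod_cast he11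
  have h2z : (a₁ + b₁) * m₂.1 + (a₂ + b₂) * m₂.2 = -1 := by exact_mod_cast he2z
  have h22 : b₁ * m₂.1 + b₂ * m₂.2 = -1 := by exact_mod_cast he22
  exact det_eq_one_or_neg_one_of_pairing_eq_neg_one h11 h22 (by linarith) (by linarith)

/-- Let `v₁ = (a₁,a₂)` and `v₂ = (b₁,b₂)` be the lattice neighbors of a vertex
`v_z = (z₁,z₂)` of a 2-dimensional reflexive polytope along the two edges through `v_z`
(the edges lie on lines `⟨·,mᵢ⟩ = -1` with `mᵢ ∈ ℤ²`, and `v₁ - v_z`, `v₂ - v_z` are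
primitive).  If `v_z = v₁ + v₂` then `a₁b₂ - a₂b₁ = ±1`. -/
theorem stmt4 (a₁ a₂ b₁ b₂ z₁ z₂ : ℤ)
    (S : Finset (ℝ × ℝ)) (hSlat : ∀ x ∈ S, isLattice2 x)
    (h0 : ((0 : ℝ), (0 : ℝ)) ∈ interior (convexHull ℝ (S : Set (ℝ × ℝ))))
    (href : ∃ T : Finset (ℝ × ℝ), (∀ x ∈ T, isLattice2 x) ∧
      dual2 (convexHull ℝ (S : Set (ℝ × ℝ))) = convexHull ℝ (T : Set (ℝ × ℝ)))
    (hzvert : ((z₁ : ℝ), (z₂ : ℝ)) ∈ Set.extremePoints ℝ (convexHull ℝ (S : Set (ℝ × ℝ))))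
    (m₁ m₂ : ℤ × ℤ) (hmne : m₁ ≠ m₂)
    (hsupp1 : ∀ x ∈ convexHull ℝ (S : Set (ℝ × ℝ)),
      dot2 x ((m₁.1 : ℝ), (m₁.2 : ℝ)) ≥ -1)
    (hsupp2 : ∀ x ∈ convexHull ℝ (S : Set (ℝ × ℝ)),
      dot2 x ((m₂.1 : ℝ), (m₂.2 : ℝ)) ≥ -1)
    (he1z : dot2 ((z₁ : ℝ), (z₂ : ℝ)) ((m₁.1 : ℝ), (m₁.2 : ℝ)) = -1)
    (he11 : dot2 ((a₁ : ℝ), (a₂ : ℝ)) ((m₁.1 : ℝ), (m₁.2 : ℝ)) = -1)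
    (he2z : dot2 ((z₁ : ℝ), (z₂ : ℝ)) ((m₂.1 : ℝ), (m₂.2 : ℝ)) = -1)
    (he22 : dot2 ((b₁ : ℝ), (b₂ : ℝ)) ((m₂.1 : ℝ), (m₂.2 : ℝ)) = -1)
    (hv1 : ((a₁ : ℝ), (a₂ : ℝ)) ∈ convexHull ℝ (S : Set (ℝ × ℝ)))
    (hv2 : ((b₁ : ℝ), (b₂ : ℝ)) ∈ convexHull ℝ (S : Set (ℝ × ℝ)))
    (hn1 : Int.gcd (a₁ - z₁) (a₂ - z₂) = 1)
    (hn2 : Int.gcd (b₁ - z₁) (b₂ - z₂) = 1)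
    (hsum : z₁ = a₁ + b₁ ∧ z₂ = a₂ + b₂) :
    a₁ * b₂ - a₂ * b₁ = 1 ∨ a₁ * b₂ - a₂ * b₁ = -1 :=
  stmt4_general a₁ a₂ b₁ b₂ z₁ z₂ m₁ m₂ he1z he11 he2z he22 hsum
end
end

section
/- The polytope ∇ ⊂ ℝ³ with vertices (-1,1,0), (2,-1,0), (-1,-1,-6), (-1,-1,6) is reflexive, but the image of its set of lattice points under the projection (z₁,z₂,z₃) ↦ (z₁,z₂) is not contained in the 2-dimensional reflexive polytope with vertices (-1,1), (1,-1) and the lattice points between them together with (2,-1); in particular, the projection of ∇ strictly contains the projection of the sub-polytope with vertices (-1,1,0), (1,-1,-2), (1,-1,2). -/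
/-!
A point lies in the dual of a convex hull iff it lies in the dual of the generating set, so
both `∇` and its dual are cut out by four explicit inequalities. For a simplex these are
inverted by barycentric coordinates: the weight of a vertex is proportional to `1 + ⟨x, u⟩`,
with `u` the normal of the opposite facet. This shows that `∇` is the dual of the lattice
simplex with vertices `(-2,-3,±1)`, `(1,0,0)`, `(0,1,0)` and that this simplex is the dual
of `∇`.
The lattice point `(0,-1,2)` of `∇` projects to `(0,-1)`, which violates the inequality
`z₁ + z₂ ≥ 0` valid on `poly9`, while `(2,-1,0)` projects off the line `z₁ + z₂ = 0`
containing the projection of `sub9`.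
-/

open Set

noncomputable section

def dot3 (x y : ℝ × ℝ × ℝ) : ℝ := x.1 * y.1 + x.2.1 * y.2.1 + x.2.2 * y.2.2

def isLattice3 (x : ℝ × ℝ × ℝ) : Prop := ∃ a b c : ℤ, x = ((a : ℝ), (b : ℝ), (c : ℝ))

def dual3 (P : Set (ℝ × ℝ × ℝ)) : Set (ℝ × ℝ × ℝ) := {v | ∀ m ∈ P, dot3 m v ≥ -1}

def proj (x : ℝ × ℝ × ℝ) : ℝ × ℝ := (x.1, x.2.1)

/-- The polytope ∇ with vertices (-1,1,0), (2,-1,0), (-1,-1,-6), (-1,-1,6). -/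
def nabla9 : Set (ℝ × ℝ × ℝ) :=
  convexHull ℝ {((-1 : ℝ), (1 : ℝ), (0 : ℝ)), ((2 : ℝ), (-1 : ℝ), (0 : ℝ)),
    ((-1 : ℝ), (-1 : ℝ), (-6 : ℝ)), ((-1 : ℝ), (-1 : ℝ), (6 : ℝ))}

/-- The 2-dimensional reflexive polytope with vertices (-1,1), (1,-1) (and the lattice
points between them) together with (2,-1). -/
def poly9 : Set (ℝ × ℝ) :=
  convexHull ℝ {((-1 : ℝ), (1 : ℝ)), ((1 : ℝ), (-1 : ℝ)), ((2 : ℝ), (-1 : ℝ))}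

/-- The sub-polytope with vertices (-1,1,0), (1,-1,-2), (1,-1,2). -/
def sub9 : Set (ℝ × ℝ × ℝ) :=
  convexHull ℝ {((-1 : ℝ), (1 : ℝ), (0 : ℝ)), ((1 : ℝ), (-1 : ℝ), (-2 : ℝ)),
    ((1 : ℝ), (-1 : ℝ), (2 : ℝ))}

lemma mem_convexHull_four_of_eq {𝕜 E : Type*} [Field 𝕜] [LinearOrder 𝕜]
    [IsStrictOrderedRing 𝕜] [AddCommGroup E] [Module 𝕜 E] {v₀ v₁ v₂ v₃ x : E}
    {w₀ w₁ w₂ w₃ : 𝕜} (h₀ : 0 ≤ w₀) (h₁ : 0 ≤ w₁) (h₂ : 0 ≤ w₂) (h₃ : 0 ≤ w₃)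
    (hsum : w₀ + w₁ + w₂ + w₃ = 1) (hx : w₀ • v₀ + w₁ • v₁ + w₂ • v₂ + w₃ • v₃ = x) :
    x ∈ convexHull 𝕜 ({v₀, v₁, v₂, v₃} : Set E) := by
  have hmem := (convex_convexHull 𝕜 ({v₀, v₁, v₂, v₃} : Set E)).sum_mem
    (t := Finset.univ) (w := ![w₀, w₁, w₂, w₃]) (z := ![v₀, v₁, v₂, v₃])
    (fun i _ => by fin_cases i <;> assumption)
    (by simpa [Fin.sum_univ_four] using hsum)
    (fun i _ => by fin_cases i <;> exact subset_convexHull 𝕜 _ (by simp))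
  simpa [Fin.sum_univ_four, hx] using hmem

lemma dot3_comm (x y : ℝ × ℝ × ℝ) : dot3 x y = dot3 y x := by
  simp only [dot3]; ring

lemma dot3_smul_add_smul (m x y : ℝ × ℝ × ℝ) (a b : ℝ) :
    dot3 m (a • x + b • y) = a * dot3 m x + b * dot3 m y := by
  simp only [dot3, Prod.fst_add, Prod.snd_add, Prod.smul_fst, Prod.smul_snd, smul_eq_mul]
  ring

lemma continuous_dot3_right (m : ℝ × ℝ × ℝ) : Continuous (dot3 m) := by
  unfold dot3; fun_prop

lemma convex_dual3 (s : Set (ℝ × ℝ × ℝ)) : Convex ℝ (dual3 s) := by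
  intro x hx y hy a b ha hb hab m hm
  have hxm := hx m hm
  have hym := hy m hm
  rw [dot3_smul_add_smul]
  nlinarith

lemma dual3_convexHull (s : Set (ℝ × ℝ × ℝ)) : dual3 (convexHull ℝ s) = dual3 s := by
  refine Subset.antisymm (fun v hv m hm => hv m (subset_convexHull ℝ s hm)) fun v hv => ?_
  -- By symmetry of `dot3`, the half-space `{m | dot3 m v ≥ -1}` is `dual3 {v}`, hence convex.
  have hs : s ⊆ dual3 {v} := fun m hm _ hv' => by rw [hv', dot3_comm]; exact hv m hm
  intro m hm
  simpa [dot3_comm] using (convex_dual3 _).convexHull_subset_iff.2 hs hm v rfl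

lemma zero_mem_interior_dual3 {s : Set (ℝ × ℝ × ℝ)} (hs : s.Finite) :
    (0 : ℝ × ℝ × ℝ) ∈ interior (dual3 s) := by
  refine interior_maximal (t := ⋂ m ∈ s, {v | -1 < dot3 m v}) ?_ ?_ ?_
  · exact fun v hv m hm => (mem_iInter₂.1 hv m hm).le
  · exact hs.isOpen_biInter fun m _ => isOpen_lt continuous_const (continuous_dot3_right m)
  · exact mem_iInter₂.2 fun m _ => by simp [dot3]

def nabla9DualVertices : Finset (ℝ × ℝ × ℝ) :=
  {((-2 : ℝ), (-3 : ℝ), (1 : ℝ)), ((-2 : ℝ), (-3 : ℝ), (-1 : ℝ)),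
    ((1 : ℝ), (0 : ℝ), (0 : ℝ)), ((0 : ℝ), (1 : ℝ), (0 : ℝ))}

lemma isLattice3_of_mem_nabla9DualVertices {x : ℝ × ℝ × ℝ} (hx : x ∈ nabla9DualVertices) :
    isLattice3 x := by
  simp only [nabla9DualVertices, Finset.mem_insert, Finset.mem_singleton] at hx
  rcases hx with rfl | rfl | rfl | rfl
  exacts [⟨-2, -3, 1, by norm_num⟩, ⟨-2, -3, -1, by norm_num⟩,
    ⟨1, 0, 0, by norm_num⟩, ⟨0, 1, 0, by norm_num⟩]

lemma nabla9_eq_dual3 : nabla9 = dual3 nabla9DualVertices := by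
  refine Subset.antisymm ((convex_dual3 _).convexHull_subset_iff.2 ?_) ?_
  · simp only [insert_subset_iff, singleton_subset_iff]
    norm_num [dual3, dot3, nabla9DualVertices]
  · rintro ⟨a, b, c⟩ hv
    have h := fun m hm => hv m (Finset.mem_coe.2 hm)
    simp only [nabla9DualVertices, Finset.mem_insert, Finset.mem_singleton, forall_eq_or_imp,
      forall_eq, dot3] at h
    obtain ⟨h₁, h₂, h₃, h₄⟩ := h
    norm_num at h₁ h₂ h₃ h₄
    refine mem_convexHull_four_of_eq (w₀ := (b + 1) / 2) (w₁ := (a + 1) / 3)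
      (w₂ := (-2 * a - 3 * b - c + 1) / 12) (w₃ := (-2 * a - 3 * b + c + 1) / 12)
      (by linarith) (by linarith) (by linarith) (by linarith) (by ring) ?_
    simp only [Prod.smul_mk, smul_eq_mul, Prod.mk_add_mk, Prod.mk.injEq]
    exact ⟨by ring, by ring, by ring⟩

lemma dual3_nabla9 : dual3 nabla9 = convexHull ℝ nabla9DualVertices := by
  rw [nabla9, dual3_convexHull]
  refine Subset.antisymm ?_ ((convex_dual3 _).convexHull_subset_iff.2 ?_)
  · rintro ⟨x, y, z⟩ hv
    simp only [dual3, mem_insert_iff, mem_singleton_iff, forall_eq_or_imp, forall_eq,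
      dot3] at hv
    obtain ⟨h₁, h₂, h₃, h₄⟩ := hv
    norm_num at h₁ h₂ h₃ h₄
    simp only [nabla9DualVertices, Finset.coe_insert, Finset.coe_singleton]
    refine mem_convexHull_four_of_eq (w₀ := (-x - y + 6 * z + 1) / 12)
      (w₁ := (-x - y - 6 * z + 1) / 12) (w₂ := (2 * x - y + 1) / 3) (w₃ := (-x + y + 1) / 2)
      (by linarith) (by linarith) (by linarith) (by linarith) (by ring) ?_
    simp only [Prod.smul_mk, smul_eq_mul, Prod.mk_add_mk, Prod.mk.injEq]
    exact ⟨by ring, by ring, by ring⟩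
  · simp only [nabla9DualVertices, Finset.coe_insert, Finset.coe_singleton, insert_subset_iff,
      singleton_subset_iff]
    norm_num [dual3, dot3]

lemma sub9_subset_nabla9 : sub9 ⊆ nabla9 := by
  refine (convex_convexHull ℝ _).convexHull_subset_iff.2 ?_
  rw [← nabla9]
  simp only [insert_subset_iff, singleton_subset_iff, nabla9_eq_dual3]
  norm_num [dual3, dot3, nabla9DualVertices]

lemma sub9_subset_antidiagonal : sub9 ⊆ {x | x.1 + x.2.1 = 0} := by
  refine (convex_hyperplane ⟨fun x y => ?_, fun c x => ?_⟩ 0).convexHull_subset_iff.2 ?_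
  · simp only [Prod.fst_add, Prod.snd_add]; ring
  · simp only [Prod.smul_fst, Prod.smul_snd, smul_eq_mul]; ring
  · simp only [insert_subset_iff, singleton_subset_iff]
    norm_num

lemma poly9_subset_halfPlane : poly9 ⊆ {p | 0 ≤ p.1 + p.2} := by
  refine (convex_halfSpace_ge ⟨fun x y => ?_, fun c x => ?_⟩ 0).convexHull_subset_iff.2 ?_
  · simp only [Prod.fst_add, Prod.snd_add]; ring
  · simp only [Prod.smul_fst, Prod.smul_snd, smul_eq_mul]; ring
  · simp only [insert_subset_iff, singleton_subset_iff]
    norm_num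

/-- ∇ is reflexive, but the image of its lattice points under the projection is not
contained in `poly9`; in particular the projection of ∇ strictly contains the projection
of the sub-polytope `sub9`. -/
theorem stmt9 :
    ((0 : ℝ), (0 : ℝ), (0 : ℝ)) ∈ interior nabla9 ∧
    (∃ T : Finset (ℝ × ℝ × ℝ), (∀ x ∈ T, isLattice3 x) ∧
      dual3 nabla9 = convexHull ℝ (T : Set (ℝ × ℝ × ℝ))) ∧
    ¬ (proj '' {x | x ∈ nabla9 ∧ isLattice3 x} ⊆ poly9) ∧
    proj '' sub9 ⊂ proj '' nabla9 := by
  refine ⟨?_, ⟨nabla9DualVertices, fun _ => isLattice3_of_mem_nabla9DualVertices,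
    dual3_nabla9⟩, fun hsub => ?_, ssubset_of_subset_not_subset
      (image_mono sub9_subset_nabla9) fun hsub => ?_⟩
  · rw [nabla9_eq_dual3]
    exact zero_mem_interior_dual3 (Finset.finite_toSet _)
  · have hmem : ((0 : ℝ), (-1 : ℝ), (2 : ℝ)) ∈ nabla9 := by
      rw [nabla9_eq_dual3]
      norm_num [dual3, dot3, nabla9DualVertices]
    have h := poly9_subset_halfPlane (hsub ⟨_, ⟨hmem, 0, -1, 2, by norm_num⟩, rfl⟩)
    norm_num [proj] at h
  · obtain ⟨x, hx, hpx⟩ := hsub ⟨((2 : ℝ), (-1 : ℝ), (0 : ℝ)),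
      subset_convexHull ℝ _ (by simp), rfl⟩
    have h := sub9_subset_antidiagonal hx
    simp only [proj, Prod.mk.injEq] at hpx
    norm_num [hpx.1, hpx.2] at h
end
end
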